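/- arXiv:2310.07174 — 5 statements merged into one kernel-verified Lean document; each statement's English description precedes it below -/
import Mathlib

section
/- Let σ : ℝ → ℝ be strictly increasing with 0 < σ(t) < 1 and σ(t) + σ(−t) = 1 for all t ∈ ℝ, and let x < y. Then the sequence (x_k) is strictly increasing, the sequence (y_k) is strictly decreasing, and x_k < y_k for every k; that is, min(x, y) < x₁ < ⋯ < x_k < y_k < ⋯ < y₁ < max(x, y). -/
/-- The soft min `m_σ(x, y) = x·σ(y − x) + y·σ(x − y)`. -/
def softMin (σ : ℝ → ℝ) (x y : ℝ) : ℝ := x * σ (y - x) + y * σ (x - y)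

/-- The soft max `M_σ(x, y) = x·σ(x − y) + y·σ(y − x)`. -/
def softMax (σ : ℝ → ℝ) (x y : ℝ) : ℝ := x * σ (x - y) + y * σ (y - x)

lemma soft_key (σ : ℝ → ℝ) (hmono : StrictMono σ)
    (h0 : ∀ t, 0 < σ t) (hσ : ∀ t, σ t + σ (-t) = 1)
    (a b : ℝ) (hab : a < b) :
    a < softMin σ a b ∧ softMin σ a b < softMax σ a b ∧ softMax σ a b < b := by
  have hsum : σ (b - a) + σ (a - b) = 1 := by
    have := hσ (b - a); simpa [neg_sub] using this
  have hpos : 0 < σ (a - b) := h0 _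
  have hlt : σ (a - b) < σ (b - a) := hmono (by linarith)
  have hd : 0 < b - a := by linarith
  refine ⟨?_, ?_, ?_⟩
  · have : softMin σ a b - a = (b - a) * σ (a - b) := by
      unfold softMin; linear_combination a * hsum
    nlinarith [mul_pos hd hpos]
  · have : softMax σ a b - softMin σ a b = (b - a) * (σ (b - a) - σ (a - b)) := by
      unfold softMin softMax; ring
    nlinarith [mul_pos hd (by linarith : (0:ℝ) < σ (b - a) - σ (a - b))]
  · have : b - softMax σ a b = (b - a) * σ (a - b) := by
      unfold softMax; linear_combination (-b) * hsum
    nlinarith [mul_pos hd hpos]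

theorem iterated_swap_strictMono_strictAnti
    (σ : ℝ → ℝ) (hmono : StrictMono σ)
    (h0 : ∀ t, 0 < σ t) (h1 : ∀ t, σ t < 1)
    (hσ : ∀ t, σ t + σ (-t) = 1)
    (x y : ℝ) (hxy : x < y)
    (X Y : ℕ → ℝ) (hX0 : X 0 = x) (hY0 : Y 0 = y)
    (hX : ∀ k, X (k + 1) = softMin σ (X k) (Y k))
    (hY : ∀ k, Y (k + 1) = softMax σ (X k) (Y k)) :
    StrictMono X ∧ StrictAnti Y ∧ ∀ k, X k < Y k := by
  have hlt : ∀ k, X k < Y k := by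
    intro k
    induction k with
    | zero => rw [hX0, hY0]; exact hxy
    | succ n ih =>
      obtain ⟨_, h2, _⟩ := soft_key σ hmono h0 hσ _ _ ih
      rw [hX, hY]; exact h2
  refine ⟨strictMono_nat_of_lt_succ fun k => ?_,
          strictAnti_nat_of_succ_lt fun k => ?_, hlt⟩
  · obtain ⟨h1', _, _⟩ := soft_key σ hmono h0 hσ _ _ (hlt k)
    rw [hX]; exact h1'
  · obtain ⟨_, _, h3⟩ := soft_key σ hmono h0 hσ _ _ (hlt k)
    rw [hY]; exact h3
end

section
/- Let σ : ℝ → ℝ satisfy σ(t) + σ(−t) = 1 for all t ∈ ℝ, and let x ≤ y. Then for every k ≥ 0, y_k − x_k = (y − x) · ∏_{i=0}^{k−1} (2σ(y_i − x_i) − 1). -/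
theorem iterated_swap_gap_product
    (σ : ℝ → ℝ) (hσ : ∀ t, σ t + σ (-t) = 1)
    (x y : ℝ) (hxy : x ≤ y)
    (X Y : ℕ → ℝ) (hX0 : X 0 = x) (hY0 : Y 0 = y)
    (hX : ∀ k, X (k + 1) = softMin σ (X k) (Y k))
    (hY : ∀ k, Y (k + 1) = softMax σ (X k) (Y k)) :
    ∀ k, Y k - X k = (y - x) * ∏ i ∈ Finset.range k, (2 * σ (Y i - X i) - 1) := by
  intro k
  induction k with
  | zero => simp [hX0, hY0]
  | succ n ih =>
    have h1 : σ (X n - Y n) = 1 - σ (Y n - X n) := by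
      have := hσ (Y n - X n)
      have h2 : -(Y n - X n) = X n - Y n := by ring
      linarith [h2 ▸ this]
    rw [Finset.prod_range_succ, hX n, hY n, softMin, softMax, h1, ← mul_assoc, ← ih]
    ring
end

section
/- Let σ : ℝ → ℝ be strictly increasing with 0 < σ(t) < 1 and σ(t) + σ(−t) = 1 for all t ∈ ℝ, and let x, y ∈ ℝ. Then as k → ∞, both x_k and y_k converge to (x + y)/2. Consequently, the accumulated softening error x_k − min(x, y) converges to (max(x, y) − min(x, y))/2. -/
theorem iterated_swap_tendsto_midpoint
    (σ : ℝ → ℝ) (hmono : StrictMono σ)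
    (h0 : ∀ t, 0 < σ t) (h1 : ∀ t, σ t < 1)
    (hσ : ∀ t, σ t + σ (-t) = 1)
    (x y : ℝ)
    (X Y : ℕ → ℝ) (hX0 : X 0 = x) (hY0 : Y 0 = y)
    (hX : ∀ k, X (k + 1) = softMin σ (X k) (Y k))
    (hY : ∀ k, Y (k + 1) = softMax σ (X k) (Y k)) :
    Filter.Tendsto X Filter.atTop (nhds ((x + y) / 2)) ∧
    Filter.Tendsto Y Filter.atTop (nhds ((x + y) / 2)) ∧
    Filter.Tendsto (fun k => X k - min x y) Filter.atTop
      (nhds ((max x y - min x y) / 2)) := by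
  have hσ0 : σ 0 = 1/2 := by have := hσ 0; rw [neg_zero] at this; linarith
  set D : ℕ → ℝ := fun k => Y k - X k with hD
  have hsum : ∀ k, X k + Y k = x + y := by
    intro k
    induction k with
    | zero => rw [hX0, hY0]
    | succ n ih =>
      have h := hσ (Y n - X n)
      rw [neg_sub] at h
      rw [hX n, hY n]
      simp only [softMin, softMax]
      linear_combination (X n + Y n) * h + ih
  have hDrec : ∀ k, D (k + 1) = D k * (2 * σ (D k) - 1) := by
    intro k
    have h := hσ (Y k - X k)
    rw [neg_sub] at h
    simp only [hD, hX k, hY k, softMin, softMax]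
    linear_combination (X k - Y k) * h
  have habs : ∀ t : ℝ, |2 * σ t - 1| = 2 * σ |t| - 1 := by
    intro t
    rcases le_or_gt 0 t with ht | ht
    · rw [abs_of_nonneg ht, abs_of_nonneg]
      have := hmono.monotone ht
      linarith [hσ0 ▸ this]
    · have h1 : σ t < 1/2 := hσ0 ▸ hmono ht
      have h2 := hσ t
      rw [abs_of_neg (by linarith), abs_of_neg ht]
      linarith
  set c : ℝ := 2 * σ |y - x| - 1 with hc
  have hc0 : 0 ≤ c := by
    have := hmono.monotone (abs_nonneg (y - x))
    simp only [hc]; linarith [hσ0 ▸ this]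
  have hc1 : c < 1 := by simp only [hc]; linarith [h1 |y - x|]
  have hbound : ∀ k, |D k| ≤ c ^ k * |y - x| := by
    intro k
    induction k with
    | zero => simp [hD, hX0, hY0]
    | succ n ih =>
      have hle : |D n| ≤ |y - x| := by
        calc |D n| ≤ c ^ n * |y - x| := ih
        _ ≤ 1 * |y - x| := by
            apply mul_le_mul_of_nonneg_right _ (abs_nonneg _)
            exact pow_le_one₀ hc0 hc1.le
        _ = |y - x| := one_mul _
      have hσle : σ |D n| ≤ σ |y - x| := hmono.monotone hle
      calc |D (n + 1)| = |D n| * |2 * σ (D n) - 1| := by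
            rw [hDrec n, abs_mul]
        _ ≤ |D n| * c := by
            apply mul_le_mul_of_nonneg_left _ (abs_nonneg _)
            rw [habs (D n)]; simp only [hc]; linarith
        _ ≤ (c ^ n * |y - x|) * c := mul_le_mul_of_nonneg_right ih hc0
        _ = c ^ (n + 1) * |y - x| := by ring
  have hDten : Filter.Tendsto D Filter.atTop (nhds 0) := by
    apply squeeze_zero_norm (fun n => ?_)
      (by simpa using (tendsto_pow_atTop_nhds_zero_of_lt_one hc0 hc1).mul_const |y - x|)
    rw [Real.norm_eq_abs]; exact hbound n
  have hXeq : ∀ k, X k = ((x + y) - D k) / 2 := by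
    intro k; have := hsum k; simp only [hD]; linarith
  have hYeq : ∀ k, Y k = ((x + y) + D k) / 2 := by
    intro k; have := hsum k; simp only [hD]; linarith
  have hXt : Filter.Tendsto X Filter.atTop (nhds ((x + y) / 2)) := by
    have : Filter.Tendsto (fun k => ((x + y) - D k) / 2) Filter.atTop
        (nhds (((x + y) - 0) / 2)) := (tendsto_const_nhds.sub hDten).div_const 2
    rw [sub_zero] at this
    exact this.congr (fun k => (hXeq k).symm)
  have hYt : Filter.Tendsto Y Filter.atTop (nhds ((x + y) / 2)) := by
    have : Filter.Tendsto (fun k => ((x + y) + D k) / 2) Filter.atTop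
        (nhds (((x + y) + 0) / 2)) := (tendsto_const_nhds.add hDten).div_const 2
    rw [add_zero] at this
    exact this.congr (fun k => (hYeq k).symm)
  refine ⟨hXt, hYt, ?_⟩
  have hval : (max x y - min x y) / 2 = (x + y) / 2 - min x y := by
    have := min_add_max x y; linarith
  rw [hval]
  exact hXt.sub_const (min x y)
end

section
/- Let σ : ℝ → ℝ be strictly increasing with 0 ≤ σ(t) ≤ 1 and σ(t) + σ(−t) = 1 for all t ∈ ℝ. Then for all x, y ∈ ℝ with x ≠ y, x·⌊σ(y − x)⌉ + y·⌊σ(x − y)⌉ = min(x, y); that is, the forward pass of the error-free differentiable swap function computes the exact minimum, so its softening error is zero. -/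
lemma sigma_half (σ : ℝ → ℝ) (hσ : ∀ t, σ t + σ (-t) = 1) : σ 0 = 1/2 := by
  have := hσ 0; simp at this; linarith

lemma round_one_of (r : ℝ) (h1 : 1/2 < r) (h2 : r ≤ 1) : round r = 1 := by
  rw [round_eq, Int.floor_eq_iff]
  norm_num; constructor <;> linarith

lemma round_zero_of (r : ℝ) (h1 : 0 ≤ r) (h2 : r < 1/2) : round r = 0 := by
  rw [round_eq, Int.floor_eq_iff]
  norm_num; constructor <;> linarith

theorem errorFree_hard_min
    (σ : ℝ → ℝ) (hmono : StrictMono σ)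
    (h0 : ∀ t, 0 ≤ σ t) (h1 : ∀ t, σ t ≤ 1)
    (hσ : ∀ t, σ t + σ (-t) = 1) :
    ∀ x y : ℝ, x ≠ y →
      x * (round (σ (y - x)) : ℝ) + y * (round (σ (x - y)) : ℝ) = min x y := by
  have h0' := sigma_half σ hσ
  have key : ∀ x y : ℝ, x < y →
      x * (round (σ (y - x)) : ℝ) + y * (round (σ (x - y)) : ℝ) = x := by
    intro x y hxy
    have hpos : σ (y - x) > 1/2 := by
      have := hmono (show (0:ℝ) < y - x by linarith); rwa [h0'] at this
    have hneg : σ (x - y) < 1/2 := by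
      have := hmono (show x - y < 0 by linarith); rwa [h0'] at this
    rw [round_one_of _ hpos (h1 _), round_zero_of _ (h0 _) hneg]
    push_cast; ring
  intro x y hxy
  rcases lt_or_gt_of_ne hxy with h | h
  · rw [key x y h, min_eq_left h.le]
  · have := key y x h
    rw [min_eq_right h.le]; linarith
end

section
/- Let σ : ℝ → ℝ be strictly increasing with 0 ≤ σ(t) ≤ 1 and σ(t) + σ(−t) = 1 for all t ∈ ℝ. Then for all x, y ∈ ℝ with x ≠ y, x·⌊σ(x − y)⌉ + y·⌊σ(y − x)⌉ = max(x, y); that is, the forward pass of the error-free differentiable swap function computes the exact maximum, so its softening error is zero. -/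
theorem errorFree_hard_max
    (σ : ℝ → ℝ) (hmono : StrictMono σ)
    (h0 : ∀ t, 0 ≤ σ t) (h1 : ∀ t, σ t ≤ 1)
    (hσ : ∀ t, σ t + σ (-t) = 1) :
    ∀ x y : ℝ, x ≠ y →
      x * (round (σ (x - y)) : ℝ) + y * (round (σ (y - x)) : ℝ) = max x y := by
  have hhalf : σ 0 = 1 / 2 := by have := hσ 0; simp at this; linarith
  have key : ∀ x y : ℝ, x < y →
      round (σ (x - y)) = 0 ∧ round (σ (y - x)) = 1 := by
    intro x y hxy
    have h1' : σ (x - y) < 1/2 := by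
      have := hmono (show x - y < 0 by linarith); rwa [hhalf] at this
    have h2' : 1/2 < σ (y - x) := by
      have := hmono (show (0:ℝ) < y - x by linarith); rwa [hhalf] at this
    refine ⟨round_eq_zero_iff.2 ⟨by linarith [h0 (x - y)], h1'⟩, ?_⟩
    rw [round_eq]
    have hub := h1 (y - x)
    rw [show (1:ℤ) = ⌊(3:ℝ)/2⌋ by norm_num]
    apply le_antisymm
    · exact Int.floor_le_floor (by linarith)
    · rw [show ⌊(3:ℝ)/2⌋ = 1 by norm_num]
      exact Int.le_floor.2 (by push_cast; linarith)
  intro x y hxy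
  rcases lt_or_gt_of_ne hxy with h | h
  · obtain ⟨r0, r1⟩ := key x y h
    rw [r0, r1, max_eq_right h.le]; push_cast; ring
  · obtain ⟨r0, r1⟩ := key y x h
    rw [r0, r1, max_eq_left h.le]; push_cast; ring
end
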